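/- Let θ > 0, T > 0, H ∈ (1/2, 1), and α_H = H(2H−1). Then (α_H/(2θ²)) ∫_0^T ∫_0^T (1 − e^{−θ(T−u)})(1 − e^{−θ(T−v)}) |u−v|^{2H−2} du dv = (α_H/θ²)[ −(e^{−2θT}/(2θ)) ∫_0^T e^{θx} x^{2H−2} dx + (1/(2θ)) ∫_0^T e^{−θx} x^{2H−2} dx − (1/(2H−1)) ∫_0^T e^{−θx} x^{2H−1} dx − (e^{−θT}/(2H−1)) ∫_0^T e^{θx} x^{2H−1} dx + T^{2H}/((2H)(2H−1)) ]. -/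

import Mathlib

/-!
Write `s = 2H - 2 ∈ (-1, 0)` and `P_c(u) = ∫_0^u e^{cx} x^s dx`. Splitting at `v = u` gives
`∫_0^T e^{dv} |u - v|^s dv = e^{du} (P_{-d}(u) + P_d(T - u))` for `u ∈ [0, T]`, and one integration
by parts, `∫_0^T e^{ku} P_d(u) du = (e^{kT} P_d(T) - P_{k+d}(T)) / k`, then evaluates
`∫_0^T e^{cu} ∫_0^T e^{dv} |u - v|^s dv du` in closed form whenever `c + d ≠ 0`.
Since `1 - e^{-θ(T-u)} = 1 - e^{-θT} e^{θu}`, the double integral is a combination of these with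
`c, d ∈ {0, θ}`; a last integration by parts writes `∫_0^T e^{±θx} x^{s+1} dx` through `P_{±θ}(T)`.
-/

open Real Set intervalIntegral
open MeasureTheory (volume)

noncomputable def expRpowIntegral (c s u : ℝ) : ℝ := ∫ x in (0:ℝ)..u, exp (c * x) * x ^ s

section
variable {s : ℝ}

lemma intervalIntegrable_exp_mul_rpow (hs : -1 < s) (c a b : ℝ) :
    IntervalIntegrable (fun x => exp (c * x) * x ^ s) volume a b :=
  (intervalIntegrable_rpow' hs).continuousOn_mul (by fun_prop)

lemma continuous_expRpowIntegral (hs : -1 < s) (c : ℝ) : Continuous (expRpowIntegral c s) :=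
  continuous_primitive (intervalIntegrable_exp_mul_rpow hs c) 0

lemma hasDerivAt_expRpowIntegral (hs : -1 < s) (c : ℝ) {x : ℝ} (hx : x ≠ 0) :
    HasDerivAt (expRpowIntegral c s) (exp (c * x) * x ^ s) x :=
  integral_hasDerivAt_right (intervalIntegrable_exp_mul_rpow hs c 0 x)
    (Measurable.stronglyMeasurable (by fun_prop)).stronglyMeasurableAtFilter
    ((by fun_prop : Continuous fun x => exp (c * x)).continuousAt.mul
      (continuousAt_rpow_const x s (Or.inl hx)))

lemma expRpowIntegral_zero_left (hs : -1 < s) (u : ℝ) :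
    expRpowIntegral 0 s u = u ^ (s + 1) / (s + 1) := by
  simp [expRpowIntegral, integral_rpow (Or.inl hs), zero_rpow (by linarith : s + 1 ≠ 0)]

lemma integral_exp_mul_expRpowIntegral (hs : -1 < s) {k : ℝ} (hk : k ≠ 0) (d T : ℝ) :
    ∫ u in (0:ℝ)..T, exp (k * u) * expRpowIntegral d s u =
      (exp (k * T) * expRpowIntegral d s T - expRpowIntegral (k + d) s T) / k := by
  have hexp : ∀ x, HasDerivAt (fun u => exp (k * u) / k) (exp (k * x)) x := fun x => by
    simpa [hk] using (((hasDerivAt_id x).const_mul k).exp).div_const k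
  have parts := integral_mul_deriv_eq_deriv_mul_of_hasDerivAt
    (continuous_expRpowIntegral hs d).continuousOn
    (by fun_prop : Continuous fun u => exp (k * u) / k).continuousOn
    (fun x hx => hasDerivAt_expRpowIntegral hs d (by rintro rfl; simp at hx; linarith))
    (fun x _ => hexp x) (intervalIntegrable_exp_mul_rpow hs d 0 T)
    ((by fun_prop : Continuous fun u => exp (k * u)).intervalIntegrable 0 T)
  have hcomb : ∀ x, exp (d * x) * x ^ s * (exp (k * x) / k) = exp ((k + d) * x) * x ^ s / k :=
    fun x => by rw [add_mul, exp_add]; ring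
  simp_rw [mul_comm (exp (k * _)), parts, hcomb, integral_div]
  simp only [expRpowIntegral, integral_same, zero_mul, sub_zero]
  ring

lemma integral_exp_mul_rpow_add_one (hs : -1 < s) {c : ℝ} (hc : c ≠ 0) (T : ℝ) :
    ∫ x in (0:ℝ)..T, exp (c * x) * x ^ (s + 1) =
      (exp (c * T) * T ^ (s + 1) - (s + 1) * expRpowIntegral c s T) / c := by
  have hs1 : s + 1 ≠ 0 := by linarith
  have h := integral_exp_mul_expRpowIntegral hs hc 0 T
  simp only [expRpowIntegral_zero_left hs, add_zero, mul_div_assoc', integral_div] at h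
  field_simp at h ⊢
  linear_combination h

lemma intervalIntegrable_abs_rpow (hs : -1 < s) (a b : ℝ) :
    IntervalIntegrable (fun x => |x| ^ s) volume a b := by
  have half : ∀ b, IntervalIntegrable (fun x => |x| ^ s) volume 0 b := by
    intro b
    rcases le_total 0 b with hb | hb
    · refine (intervalIntegrable_rpow' hs).congr fun x hx => ?_
      rw [uIoc_of_le hb] at hx
      simp [abs_of_pos hx.1]
    · have h := (intervalIntegrable_rpow' hs (a := 0) (b := -b)).comp_sub_left 0
      simp only [zero_sub, sub_zero, sub_neg_eq_add, zero_add] at h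
      refine h.congr fun x hx => ?_
      rw [uIoc_of_ge hb] at hx
      simp [abs_of_nonpos hx.2]
  exact (half a).symm.trans (half b)

lemma intervalIntegrable_exp_mul_abs_sub_rpow (hs : -1 < s) (c u a b : ℝ) :
    IntervalIntegrable (fun v => exp (c * v) * |u - v| ^ s) volume a b := by
  have h := (intervalIntegrable_abs_rpow hs (u - a) (u - b)).comp_sub_left u
  simp only [sub_sub_cancel] at h
  exact h.continuousOn_mul (by fun_prop)

lemma integral_exp_mul_abs_sub_rpow (hs : -1 < s) (c : ℝ) {T u : ℝ} (hu : u ∈ Icc 0 T) :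
    ∫ v in (0:ℝ)..T, exp (c * v) * |u - v| ^ s =
      exp (c * u) * (expRpowIntegral (-c) s u + expRpowIntegral c s (T - u)) := by
  have hint := intervalIntegrable_exp_mul_abs_sub_rpow hs c u
  rw [← integral_add_adjacent_intervals (hint 0 u) (hint u T), mul_add]
  congr 1
  · have hleft : EqOn (fun v => exp (c * v) * |u - v| ^ s)
        (fun v => exp (c * u) * (exp (-c * (u - v)) * (u - v) ^ s)) (uIcc 0 u) := by
      intro v hv
      rw [uIcc_of_le hu.1] at hv
      simp only [abs_of_nonneg (sub_nonneg.2 hv.2), ← mul_assoc, ← exp_add]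
      ring_nf
    rw [integral_congr hleft, integral_const_mul,
      integral_comp_sub_left (fun x => exp (-c * x) * x ^ s), sub_self, sub_zero, expRpowIntegral]
  · have hright : EqOn (fun v => exp (c * v) * |u - v| ^ s)
        (fun v => exp (c * u) * (exp (c * (v - u)) * (v - u) ^ s)) (uIcc u T) := by
      intro v hv
      rw [uIcc_of_le hu.2] at hv
      simp only [abs_sub_comm u, abs_of_nonneg (sub_nonneg.2 hv.1), ← mul_assoc, ← exp_add]
      ring_nf
    rw [integral_congr hright, integral_const_mul,
      integral_comp_sub_right (fun x => exp (c * x) * x ^ s), sub_self, expRpowIntegral]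

lemma integral_exp_mul_integral_exp_mul_abs_sub_rpow (hs : -1 < s) {c d : ℝ} (hcd : c + d ≠ 0)
    {T : ℝ} (hT : 0 ≤ T) :
    ∫ u in (0:ℝ)..T, exp (c * u) * ∫ v in (0:ℝ)..T, exp (d * v) * |u - v| ^ s =
      (exp ((c + d) * T) * (expRpowIntegral (-d) s T + expRpowIntegral (-c) s T)
        - expRpowIntegral c s T - expRpowIntegral d s T) / (c + d) := by
  have hP := continuous_expRpowIntegral hs
  have hinner : EqOn (fun u => exp (c * u) * ∫ v in (0:ℝ)..T, exp (d * v) * |u - v| ^ s)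
      (fun u => exp ((c + d) * u) * expRpowIntegral (-d) s u
        + exp ((c + d) * T) * (exp (-(c + d) * (T - u)) * expRpowIntegral d s (T - u)))
      (uIcc 0 T) := by
    intro u hu
    rw [uIcc_of_le hT] at hu
    simp only [integral_exp_mul_abs_sub_rpow hs d hu, mul_add, ← mul_assoc, ← exp_add]
    ring_nf
  have hcont₁ : Continuous fun u => exp ((c + d) * u) * expRpowIntegral (-d) s u := by
    have := hP (-d); fun_prop
  have hcont₂ : Continuous fun u =>
      exp ((c + d) * T) * (exp (-(c + d) * (T - u)) * expRpowIntegral d s (T - u)) := by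
    have := hP d; fun_prop
  rw [integral_congr hinner,
    integral_add (hcont₁.intervalIntegrable 0 T) (hcont₂.intervalIntegrable 0 T),
    integral_const_mul,
    integral_comp_sub_left (fun x => exp (-(c + d) * x) * expRpowIntegral d s x),
    sub_self, sub_zero, integral_exp_mul_expRpowIntegral hs hcd,
    integral_exp_mul_expRpowIntegral hs (neg_ne_zero.2 hcd),
    show c + d + -d = c by ring, show -(c + d) + d = -c by ring, neg_mul, exp_neg]
  field_simp
  ring

lemma integral_integral_abs_sub_rpow (hs : -1 < s) {T : ℝ} (hT : 0 ≤ T) :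
    ∫ u in (0:ℝ)..T, ∫ v in (0:ℝ)..T, |u - v| ^ s = 2 * T ^ (s + 2) / ((s + 1) * (s + 2)) := by
  have hinner : EqOn (fun u => ∫ v in (0:ℝ)..T, |u - v| ^ s)
      (fun u => (u ^ (s + 1) + (T - u) ^ (s + 1)) / (s + 1)) (uIcc 0 T) := by
    intro u hu
    rw [uIcc_of_le hT] at hu
    simpa [expRpowIntegral_zero_left hs, add_div] using integral_exp_mul_abs_sub_rpow hs 0 hu
  have hpow : Continuous fun u : ℝ => u ^ (s + 1) :=
    continuous_id.rpow_const fun _ => Or.inr (by linarith)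
  have hpow' : Continuous fun u : ℝ => (T - u) ^ (s + 1) := hpow.comp (continuous_sub_left T)
  rw [integral_congr hinner, integral_div,
    integral_add (hpow.intervalIntegrable 0 T) (hpow'.intervalIntegrable 0 T),
    integral_comp_sub_left (fun x => x ^ (s + 1)), sub_self, sub_zero,
    integral_rpow (Or.inl (by linarith)), zero_rpow (by linarith), show s + 1 + 1 = s + 2 by ring]
  have : s + 1 ≠ 0 := by linarith
  have : s + 2 ≠ 0 := by linarith
  field_simp
  ring

lemma intervalIntegrable_exp_mul_integral_exp_mul_abs_sub_rpow (hs : -1 < s) (c d : ℝ) {T : ℝ}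
    (hT : 0 ≤ T) :
    IntervalIntegrable (fun u => exp (c * u) * ∫ v in (0:ℝ)..T, exp (d * v) * |u - v| ^ s)
      volume 0 T := by
  have hP := continuous_expRpowIntegral hs
  have hcont : Continuous fun u =>
      exp (c * u) * (exp (d * u) * (expRpowIntegral (-d) s u + expRpowIntegral d s (T - u))) := by
    have := hP d; have := hP (-d); fun_prop
  refine (hcont.continuousOn.congr fun u hu => ?_).intervalIntegrable
  rw [uIcc_of_le hT] at hu
  rw [integral_exp_mul_abs_sub_rpow hs d hu]

lemma integral_integral_one_sub_mul_exp_mul_abs_sub_rpow (hs : -1 < s) (a : ℝ) {θ : ℝ}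
    (hθ : θ ≠ 0) {T : ℝ} (hT : 0 ≤ T) :
    ∫ u in (0:ℝ)..T, ∫ v in (0:ℝ)..T,
        (1 - a * exp (θ * u)) * (1 - a * exp (θ * v)) * |u - v| ^ s =
      2 * T ^ (s + 2) / ((s + 1) * (s + 2))
        - 2 * a * (exp (θ * T) * (T ^ (s + 1) / (s + 1) + expRpowIntegral (-θ) s T)
            - expRpowIntegral θ s T - T ^ (s + 1) / (s + 1)) / θ
        + a ^ 2 * (exp (2 * θ * T) * expRpowIntegral (-θ) s T - expRpowIntegral θ s T) / θ := by
  set A : ℝ → ℝ := fun u => ∫ v in (0:ℝ)..T, |u - v| ^ s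
  set B : ℝ → ℝ := fun u => ∫ v in (0:ℝ)..T, exp (θ * v) * |u - v| ^ s
  have hinner : ∀ u,
      ∫ v in (0:ℝ)..T, (1 - a * exp (θ * u)) * (1 - a * exp (θ * v)) * |u - v| ^ s
        = (1 - a * exp (θ * u)) * (A u - a * B u) := by
    intro u
    have hpt : ∀ v, (1 - a * exp (θ * u)) * (1 - a * exp (θ * v)) * |u - v| ^ s
        = (1 - a * exp (θ * u)) * (|u - v| ^ s - a * (exp (θ * v) * |u - v| ^ s)) := fun v => by
      ring
    have h0 : IntervalIntegrable (fun v => |u - v| ^ s) volume 0 T := by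
      simpa using intervalIntegrable_exp_mul_abs_sub_rpow hs 0 u 0 T
    simp only [hpt]
    rw [integral_const_mul, integral_sub h0
      ((intervalIntegrable_exp_mul_abs_sub_rpow hs θ u 0 T).const_mul a), integral_const_mul]
  have hint := fun c d => intervalIntegrable_exp_mul_integral_exp_mul_abs_sub_rpow hs c d hT
  have hIA : IntervalIntegrable A volume 0 T := by simpa using hint 0 0
  have hIB : IntervalIntegrable B volume 0 T := by simpa using hint 0 θ
  have hIA' : IntervalIntegrable (fun u => exp (θ * u) * A u) volume 0 T := by
    simpa using hint θ 0
  have hIB' : IntervalIntegrable (fun u => exp (θ * u) * B u) volume 0 T := hint θ θ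
  have hexpand : ∀ u, (1 - a * exp (θ * u)) * (A u - a * B u)
      = A u - a * (exp (θ * u) * A u + B u) + a ^ 2 * (exp (θ * u) * B u) := fun u => by ring
  have hJθ0 : ∫ u in (0:ℝ)..T, exp (θ * u) * A u = (exp (θ * T) *
      (expRpowIntegral 0 s T + expRpowIntegral (-θ) s T) - expRpowIntegral θ s T
        - expRpowIntegral 0 s T) / θ := by
    simpa using integral_exp_mul_integral_exp_mul_abs_sub_rpow hs (c := θ) (d := 0) (by simpa) hT
  have hJ0θ : ∫ u in (0:ℝ)..T, B u = (exp (θ * T) *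
      (expRpowIntegral (-θ) s T + expRpowIntegral 0 s T) - expRpowIntegral 0 s T
        - expRpowIntegral θ s T) / θ := by
    simpa using integral_exp_mul_integral_exp_mul_abs_sub_rpow hs (c := 0) (d := θ) (by simpa) hT
  simp only [hinner, hexpand]
  rw [integral_add (hIA.sub ((hIA'.add hIB).const_mul a)) (hIB'.const_mul _),
    integral_sub hIA ((hIA'.add hIB).const_mul a), integral_const_mul, integral_const_mul,
    integral_add hIA' hIB, integral_integral_abs_sub_rpow hs hT, hJθ0, hJ0θ,
    integral_exp_mul_integral_exp_mul_abs_sub_rpow hs (by simpa [← two_mul]) hT,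
    expRpowIntegral_zero_left hs]
  ring_nf

end

/-- For `θ, T > 0`, `H ∈ (1/2,1)`, `α_H = H(2H-1)`:
the fractional double integral in the zero-coupon bond price evaluates as
`(α_H/(2θ²)) ∫_0^T ∫_0^T (1-e^{-θ(T-u)})(1-e^{-θ(T-v)})|u-v|^{2H-2} du dv
 = (α_H/θ²)[ -(e^{-2θT}/(2θ))∫_0^T e^{θx}x^{2H-2}dx + (1/(2θ))∫_0^T e^{-θx}x^{2H-2}dx
   - (1/(2H-1))∫_0^T e^{-θx}x^{2H-1}dx - (e^{-θT}/(2H-1))∫_0^T e^{θx}x^{2H-1}dx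
   + T^{2H}/((2H)(2H-1)) ]`. -/
theorem stmt_11 (θ T H : ℝ) (hθ : 0 < θ) (hT : 0 < T) (hH : H ∈ Set.Ioo (1/2 : ℝ) 1) :
    (H * (2 * H - 1) / (2 * θ ^ 2)) *
        ∫ u in (0:ℝ)..T, ∫ v in (0:ℝ)..T,
          (1 - Real.exp (-θ * (T - u))) * (1 - Real.exp (-θ * (T - v))) *
            |u - v| ^ (2 * H - 2) =
      (H * (2 * H - 1) / θ ^ 2) *
        (-(Real.exp (-2 * θ * T) / (2 * θ)) *
            (∫ x in (0:ℝ)..T, Real.exp (θ * x) * x ^ (2 * H - 2)) +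
          (1 / (2 * θ)) * (∫ x in (0:ℝ)..T, Real.exp (-θ * x) * x ^ (2 * H - 2)) -
          (1 / (2 * H - 1)) * (∫ x in (0:ℝ)..T, Real.exp (-θ * x) * x ^ (2 * H - 1)) -
          (Real.exp (-θ * T) / (2 * H - 1)) *
            (∫ x in (0:ℝ)..T, Real.exp (θ * x) * x ^ (2 * H - 1)) +
          T ^ (2 * H) / ((2 * H) * (2 * H - 1))) := by
  obtain ⟨hH₁, -⟩ := hH
  have hθ' : θ ≠ 0 := hθ.ne'
  set s := 2 * H - 2
  have hs : -1 < s := by linarith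
  rw [show 2 * H - 1 = s + 1 by ring, show 2 * H = s + 2 by ring]
  have hweight : ∀ x, 1 - exp (-θ * (T - x)) = 1 - exp (-θ * T) * exp (θ * x) := fun x => by
    rw [← exp_add]; ring_nf
  simp only [hweight]
  rw [integral_integral_one_sub_mul_exp_mul_abs_sub_rpow hs _ hθ' hT.le,
    integral_exp_mul_rpow_add_one hs hθ', integral_exp_mul_rpow_add_one hs (neg_ne_zero.2 hθ'),
    ← expRpowIntegral, ← expRpowIntegral]
  set b := exp (θ * T) with hb
  have h1 : exp (-θ * T) = b⁻¹ := by rw [hb, ← exp_neg, neg_mul]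
  have h2 : exp (-2 * θ * T) = (b ^ 2)⁻¹ := by rw [hb, ← exp_nat_mul, ← exp_neg]; ring_nf
  have h2' : exp (2 * θ * T) = b ^ 2 := by rw [hb, ← exp_nat_mul]; ring_nf
  rw [h1, h2, h2']
  have : s + 1 ≠ 0 := by linarith
  have : s + 2 ≠ 0 := by linarith
  have : b ≠ 0 := (exp_pos _).ne'
  field_simp
  ring
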